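/- arXiv:2107.04683 — 5 statements merged into one kernel-verified Lean document; each statement's English description precedes it below -/
import Mathlib

section
/- For every m ≥ 1 and every prime n, every rejecting state of the DFA A_n^m is covered by a word of the form a_1 a_2^{j_2} a_3^{j_3} ⋯ a_m^{j_m} with 1 ≤ j_i ≤ n−1 for each 2 ≤ i ≤ m. -/
open Set

/-- A DFA bundled with a finite state type. -/
structure FinDFA (α : Type) : Type 1 where
  σ : Type
  [fin : Finite σ]
  M : DFA α σ

attribute [instance] FinDFA.fin

/-- The number of states of a bundled DFA. -/
noncomputable def FinDFA.card {α : Type} (B : FinDFA α) : ℕ := Nat.card B.σ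

/-- The language of a bundled DFA. -/
def FinDFA.accepts {α : Type} (B : FinDFA α) : Language α := B.M.accepts

/-- `l` is a decomposition of `A`: every member has fewer states than `A`,
and the language of `A` is the intersection of the languages of the members. -/
def IsDecomposition {α Q : Type} (A : DFA α Q) (l : List (FinDFA α)) : Prop :=
  (∀ B ∈ l, B.card < Nat.card Q) ∧
    ∀ w : List α, w ∈ A.accepts ↔ ∀ B ∈ l, w ∈ B.accepts

/-- `A` is composite if it has a decomposition. -/
def CompositeDFA {α Q : Type} (A : DFA α Q) : Prop :=
  ∃ l : List (FinDFA α), IsDecomposition A l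

/-- `A` is `k`-factor composite if it has a decomposition with at most `k` factors. -/
def IsKFactorComposite {α Q : Type} (A : DFA α Q) (k : ℕ) : Prop :=
  ∃ l : List (FinDFA α), l.length ≤ k ∧ IsDecomposition A l

/-- The width of `A`: the least number of factors in a decomposition of `A`. -/
noncomputable def DFAwidth {α Q : Type} (A : DFA α Q) : ℕ :=
  sInf {k : ℕ | ∃ l : List (FinDFA α), l.length = k ∧ IsDecomposition A l}

/-- `B` is a factor of `A` if it is a member of some decomposition of `A`. -/
def IsFactor {α Q : Type} (A : DFA α Q) (B : FinDFA α) : Prop :=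
  ∃ l : List (FinDFA α), B ∈ l ∧ IsDecomposition A l

/-- `A` is trim: every state is reachable from the initial state. -/
def Trim {α Q : Type} (A : DFA α Q) : Prop :=
  ∀ q : Q, ∃ w : List α, A.eval w = q

/-- `A` is a permutation DFA: every letter acts bijectively on the states. -/
def IsPermutationDFA {α Q : Type} (A : DFA α Q) : Prop :=
  ∀ a : α, Function.Bijective fun q => A.step q a

/-- `A` is commutative. -/
def CommutativeDFA {α Q : Type} (A : DFA α Q) : Prop :=
  ∀ (q : Q) (u v : List α), A.evalFrom q (u ++ v) = A.evalFrom q (v ++ u)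

/-- The image of a set of states under the action of a word. -/
def wordImage {α Q : Type} (A : DFA α Q) (U : Set Q) (w : List α) : Set Q :=
  (fun q => A.evalFrom q w) '' U

/-- The orbit of a set of states: all images of it under words. -/
def orbitOf {α Q : Type} (A : DFA α Q) (U : Set Q) : Set (Set Q) :=
  {V | ∃ w : List α, V = wordImage A U w}

/-- The orbit-DFA `A^U`. Its states are the members of the orbit of `U`, its initial
state is `U`, and its accepting states are the members of the orbit that meet the
accepting states of `A`. -/
def orbitDFA {α Q : Type} (A : DFA α Q) (U : Set Q) : DFA α (orbitOf A U) where
  step V a := ⟨(fun q => A.step q a) '' V.1, by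
    obtain ⟨w, hw⟩ := V.2
    exact ⟨w ++ [a], by
      simp [wordImage, hw, Set.image_image, DFA.evalFrom_append_singleton]⟩⟩
  start := ⟨U, ⟨[], by simp [wordImage]⟩⟩
  accept := {V | (V.1 ∩ A.accept).Nonempty}

/-- The orbit-DFA `A^U` covers a rejecting state `q` of `A` if it is smaller than `A`
and one of its states contains `q` and no accepting state of `A`. -/
def OrbitCovers {α Q : Type} (A : DFA α Q) (U : Set Q) (q : Q) : Prop :=
  Nat.card (orbitOf A U) < Nat.card Q ∧ ∃ V ∈ orbitOf A U, q ∈ V ∧ V ∩ A.accept = ∅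

/-- The `k`-th power of a word. -/
def wpow {α : Type} (u : List α) : ℕ → List α
  | 0 => []
  | k + 1 => u ++ wpow u k

/-- The word `u` covers the rejecting state `q`: `u` moves `q`, and all states reached
from `q` by iterating `u` are rejecting. -/
def WordCovers {α Q : Type} (A : DFA α Q) (u : List α) (q : Q) : Prop :=
  A.evalFrom q u ≠ q ∧ ∀ k : ℕ, A.evalFrom q (wpow u k) ∉ A.accept

/-- `A` is decomposable into its orbit-DFAs. -/
def OrbitDecomposable {α Q : Type} (A : DFA α Q) : Prop :=
  ∃ Us : List (Set Q),
    (∀ U ∈ Us, A.start ∈ U ∧ Nat.card (orbitOf A U) < Nat.card Q) ∧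
    ∀ w : List α, w ∈ A.accepts ↔ ∀ U ∈ Us, w ∈ (orbitDFA A U).accepts

/-- The DFA `A_n^m`: states are `m`-tuples over `ℤ/nℤ`, the letter `a_i` increments the
`i`-th coordinate, the initial state is the zero tuple, and a state is accepting iff it has
at least one coordinate equal to `0` and at least one coordinate different from `0`. -/
def Anm (n m : ℕ) : DFA (Fin m) (Fin m → ZMod n) where
  step q i := Function.update q i (q i + 1)
  start := fun _ => 0
  accept := {q | (∃ i, q i = 0) ∧ ∃ j, q j ≠ 0}


lemma Anm_evalFrom (n m : ℕ) (q : Fin m → ZMod n) (u : List (Fin m)) :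
    (Anm n m).evalFrom q u = fun i => q i + (u.count i : ZMod n) := by
  induction u generalizing q with
  | nil => simp [DFA.evalFrom]
  | cons a u ih =>
    have h : (Anm n m).evalFrom q (a :: u) = (Anm n m).evalFrom ((Anm n m).step q a) u := rfl
    rw [h, ih]
    funext i
    simp only [Anm, Function.update_apply, List.count_cons]
    by_cases hia : i = a
    · subst hia
      simp only [if_pos rfl, beq_self_eq_true, if_pos]
      push_cast
      ring
    · have : ¬(a == i) = true := by simpa [beq_iff_eq] using fun h => hia h.symm
      simp [hia, this]

lemma count_wpow {α} [BEq α] (u : List α) (k : ℕ) (a : α) :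
    (wpow u k).count a = k * u.count a := by
  induction k with
  | zero => simp [wpow]
  | succ k ih => simp [wpow, List.count_append, ih]; ring

lemma count_word (m : ℕ) (j : Fin m → ℕ) (i : Fin m) :
    ((List.ofFn fun i' : Fin m => List.replicate (j i') i').flatten).count i = j i := by
  rw [List.count_flatten, List.map_ofFn, List.sum_ofFn]
  simp [Function.comp, List.count_replicate]

lemma not_accept_of_mul (n m : ℕ) [Fact n.Prime] (f : ZMod n) (g : Fin m → ZMod n)
    (hg : ∀ i, g i ≠ 0) : (fun i => f * g i) ∉ (Anm n m).accept := by
  rintro ⟨⟨i, hi⟩, ⟨i', hi'⟩⟩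
  rcases eq_or_ne f 0 with hf | hf
  · exact hi' (by simp [hf])
  · exact (mul_ne_zero hf (hg i)) hi

lemma zmod_cast_val (n : ℕ) [NeZero n] (x : ZMod n) : ((x.val : ℕ) : ZMod n) = x := by
  simp [ZMod.natCast_val, ZMod.cast_id]


/-- for `m ≥ 1` and `n` prime, every rejecting state of `A_n^m` is covered
by a word of the form `a_1 a_2^{j_2} ⋯ a_m^{j_m}` with `1 ≤ j_i ≤ n - 1` for `i ≥ 2`. -/
theorem Anm_rejecting_covered (n m : ℕ) (hm : 1 ≤ m) (hn : n.Prime)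
    (q : Fin m → ZMod n) (hq : q ∉ (Anm n m).accept) :
    ∃ j : Fin m → ℕ, j ⟨0, hm⟩ = 1 ∧
      (∀ i : Fin m, (i : ℕ) ≠ 0 → 1 ≤ j i ∧ j i ≤ n - 1) ∧
      WordCovers (Anm n m)
        ((List.ofFn fun i : Fin m => List.replicate (j i) i).flatten) q := by
  haveI : Fact n.Prime := ⟨hn⟩
  haveI : NeZero n := ⟨hn.ne_zero⟩
  have hn2 : 2 ≤ n := hn.two_le
  set i0 : Fin m := ⟨0, hm⟩
  by_cases hz : ∀ i, q i ≠ 0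
  · -- all coordinates nonzero: take j i = (q i / q i0).val
    refine ⟨fun i => (q i * (q i0)⁻¹).val, ?_, ?_, ?_, ?_⟩
    · show (q i0 * (q i0)⁻¹).val = 1
      rw [mul_inv_cancel₀ (hz i0), ZMod.val_one]
    · intro i _
      have hne : q i * (q i0)⁻¹ ≠ 0 := mul_ne_zero (hz i) (inv_ne_zero (hz i0))
      have h1 : (q i * (q i0)⁻¹).val ≠ 0 := fun h => hne ((ZMod.val_eq_zero _).1 h)
      have h2 : (q i * (q i0)⁻¹).val < n := ZMod.val_lt _
      show 1 ≤ (q i * (q i0)⁻¹).val ∧ (q i * (q i0)⁻¹).val ≤ n - 1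
      omega
    · intro h
      rw [Anm_evalFrom] at h
      have h2 := congrFun h i0
      simp only [count_word, zmod_cast_val, mul_inv_cancel₀ (hz i0), add_eq_left] at h2
      exact (one_ne_zero : (1 : ZMod n) ≠ 0) h2
    · intro k
      rw [Anm_evalFrom]
      have key : (fun i => q i +
          ((wpow ((List.ofFn fun i' : Fin m =>
            List.replicate ((q i' * (q i0)⁻¹).val) i').flatten) k).count i : ZMod n)) =
          fun i => (1 + (k : ZMod n) * (q i0)⁻¹) * q i := by
        funext i
        rw [count_wpow, count_word]
        push_cast
        rw [zmod_cast_val]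
        ring
      rw [key]
      exact not_accept_of_mul n m _ q hz
  · push_neg at hz
    obtain ⟨i1, hi1⟩ := hz
    have hq0 : ∀ i, q i = 0 := by
      by_contra h
      push_neg at h
      obtain ⟨i2, hi2⟩ := h
      exact hq ⟨⟨i1, hi1⟩, ⟨i2, hi2⟩⟩
    refine ⟨fun _ => 1, rfl, fun i _ => ⟨le_refl 1, by show (1:ℕ) ≤ n - 1; omega⟩, ?_, ?_⟩
    · intro h
      rw [Anm_evalFrom] at h
      have h2 := congrFun h i0
      have hc : List.count i0 (List.ofFn fun i : Fin m => List.replicate 1 i).flatten = 1 :=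
        count_word m (fun _ => 1) i0
      simp only [hc, Nat.cast_one, add_eq_left] at h2
      exact (one_ne_zero : (1 : ZMod n) ≠ 0) h2
    · intro k
      rw [Anm_evalFrom]
      have key : (fun i => q i +
          ((wpow ((List.ofFn fun i' : Fin m =>
            List.replicate 1 i').flatten) k).count i : ZMod n)) =
          fun i => (k : ZMod n) * (1 : ZMod n) := by
        funext i
        rw [count_wpow]
        have := count_word m (fun _ => 1) i
        simp only [this, hq0 i, zero_add, mul_one, Nat.cast_mul, Nat.cast_one]
      rw [key]
      exact not_accept_of_mul n m _ (fun _ => 1) (fun _ => one_ne_zero)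
end

section
/- Let m ≥ 1 and let n be prime. For all tuples (k_2,…,k_m) and (ℓ_2,…,ℓ_m) in {1,…,n−1}^{m−1}, if some word u ∈ Σ* covers both states ([1],[k_2],…,[k_m]) and ([1],[ℓ_2],…,[ℓ_m]) of the DFA A_n^m, then k_i = ℓ_i for all 2 ≤ i ≤ m; i.e., no single word covers two distinct states of the form ([1],[k_2],…,[k_m]) with all k_i ∈ {1,…,n−1}. -/
open Set

lemma wpow_count {m : ℕ} (u : List (Fin m)) (k : ℕ) (i : Fin m) :
    (wpow u k).count i = k * u.count i := by
  induction k with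
  | zero => simp [wpow]
  | succ k ih => simp [wpow, List.count_append, ih]; ring

lemma cover_scalar (n m : ℕ) [Fact n.Prime] (q : Fin m → ZMod n)
    (u : List (Fin m)) (h : WordCovers (Anm n m) u q) :
    ∃ t : ZMod n, ∀ j, q j = t * (u.count j : ZMod n) := by
  obtain ⟨hne, hrej⟩ := h
  haveI : NeZero n := ⟨(Fact.out : n.Prime).ne_zero⟩
  have hex : ∃ i, (u.count i : ZMod n) ≠ 0 := by
    by_contra h0
    push_neg at h0
    apply hne
    rw [Anm_evalFrom]
    funext i
    simp [h0 i]
  obtain ⟨i0, hi0⟩ := hex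
  set t : ZMod n := -q i0 / (u.count i0 : ZMod n) with ht
  obtain ⟨k, hk⟩ : ∃ k : ℕ, (k : ZMod n) = t := ⟨t.val, ZMod.natCast_rightInverse t⟩
  have heval : (Anm n m).evalFrom q (wpow u k) = fun i => q i + t * (u.count i : ZMod n) := by
    rw [Anm_evalFrom]
    funext i
    rw [wpow_count]
    push_cast
    rw [hk]
  have hrk := hrej k
  rw [heval] at hrk
  have hi0zero : q i0 + t * (u.count i0 : ZMod n) = 0 := by
    rw [ht, div_mul_cancel₀ _ hi0]
    ring
  refine ⟨-t, fun j => ?_⟩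
  by_contra hj
  apply hrk
  constructor
  · exact ⟨i0, hi0zero⟩
  · refine ⟨j, fun h0 => hj ?_⟩
    have : q j = -(t * (u.count j : ZMod n)) := by linear_combination h0
    rw [this]; ring

/-- for `m ≥ 1` and `n` prime, no single word covers two distinct states of
`A_n^m` of the form `([1], [k_2], …, [k_m])` with all `k_i ∈ {1, …, n-1}` (i.e. with first
coordinate `1` and all other coordinates nonzero). -/
theorem Anm_no_double_cover (n m : ℕ) (hm : 1 ≤ m) (hn : n.Prime)
    (q q' : Fin m → ZMod n)
    (hq0 : q ⟨0, hm⟩ = 1) (hq'0 : q' ⟨0, hm⟩ = 1)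
    (hq : ∀ i : Fin m, (i : ℕ) ≠ 0 → q i ≠ 0)
    (hq' : ∀ i : Fin m, (i : ℕ) ≠ 0 → q' i ≠ 0)
    (u : List (Fin m))
    (hcov : WordCovers (Anm n m) u q) (hcov' : WordCovers (Anm n m) u q') :
    q = q' := by
  haveI : Fact n.Prime := ⟨hn⟩
  obtain ⟨t, htq⟩ := cover_scalar n m q u hcov
  obtain ⟨t', htq'⟩ := cover_scalar n m q' u hcov'
  have h1 : t * (u.count ⟨0, hm⟩ : ZMod n) = 1 := by rw [← htq, hq0]
  have h2 : t' * (u.count ⟨0, hm⟩ : ZMod n) = 1 := by rw [← htq', hq'0]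
  have hc0 : (u.count (⟨0, hm⟩ : Fin m) : ZMod n) ≠ 0 := by
    intro h0
    rw [h0, mul_zero] at h1
    exact one_ne_zero h1.symm
  have htt : t = t' := by
    have := h1.trans h2.symm
    exact mul_right_cancel₀ hc0 this
  funext j
  rw [htq, htq', htt]
end

section
/- Let A = ⟨{a},Q,q_I,δ,F⟩ be a trim permutation DFA over a one-letter alphabet and let k ∈ ℕ. Then A is k-factor composite if and only if there exists a set P of at most k prime divisors of |Q| such that every rejecting state of A is covered by the word a^{|Q|/p} for some p ∈ P. -/
open Set

namespace UnaryAux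

theorem unary_evalFrom {σ : Type} (M : DFA Unit σ) (q : σ) (w : List Unit) :
    M.evalFrom q w = (fun s => M.step s ())^[w.length] q := by
  induction w generalizing q with
  | nil => rfl
  | cons a w ih =>
    cases a
    show M.evalFrom (M.step q ()) w = _
    rw [ih, List.length_cons, Function.iterate_succ_apply]

theorem list_unit_eq (w : List Unit) : w = List.replicate w.length () := by
  apply List.eq_replicate_of_mem; intro b _; rfl

theorem wpow_replicate (r k : ℕ) :
    wpow (List.replicate r ()) k = List.replicate (k * r) () := by
  induction k with
  | zero => simp [wpow]
  | succ k ih =>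
    show List.replicate r () ++ _ = _
    rw [ih, ← List.replicate_add, Nat.succ_mul, Nat.add_comm]

theorem unary_struct {Q : Type} [Finite Q] (A : DFA Unit Q) (htrim : Trim A)
    (hperm : IsPermutationDFA A) :
    (∀ q : Q, ∃ m : ℕ, (fun q => A.step q ())^[m] A.start = q) ∧
    (∀ m m' : ℕ, (fun q => A.step q ())^[m] A.start = (fun q => A.step q ())^[m'] A.start
      ↔ m ≡ m' [MOD Nat.card Q]) := by
  classical
  set π : Q → Q := fun q => A.step q () with hπ
  have hbij : Function.Bijective π := hperm ()
  set f : ℕ → Q := fun m => π^[m] A.start with hf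
  have hsurj : ∀ q : Q, ∃ m : ℕ, f m = q := by
    intro q
    obtain ⟨w, hw⟩ := htrim q
    refine ⟨w.length, ?_⟩
    show π^[w.length] A.start = q
    rw [hπ, ← unary_evalFrom]
    exact hw
  -- existence of a positive period
  have H : ∃ t, 0 < t ∧ π^[t] A.start = A.start := by
    obtain ⟨x, y, hxy, hfe⟩ := Finite.exists_ne_map_eq_of_infinite f
    rcases hxy.lt_or_gt with h | h
    · refine ⟨y - x, by omega, ?_⟩
      have : π^[x] (π^[y - x] A.start) = π^[x] A.start := by
        rw [← Function.iterate_add_apply]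
        have : x + (y - x) = y := by omega
        rw [this]; exact hfe.symm
      exact (hbij.injective.iterate x) this
    · refine ⟨x - y, by omega, ?_⟩
      have : π^[y] (π^[x - y] A.start) = π^[y] A.start := by
        rw [← Function.iterate_add_apply]
        have : y + (x - y) = x := by omega
        rw [this]; exact hfe
      exact (hbij.injective.iterate y) this
  set c := Nat.find H with hc_def
  obtain ⟨hc_pos, hc_eq⟩ := Nat.find_spec H
  have hper : ∀ m, f (m + c) = f m := by
    intro m
    show π^[m + c] A.start = π^[m] A.start
    rw [Function.iterate_add_apply, hc_eq]
  have hpermul : ∀ m t, f (m + t * c) = f m := by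
    intro m t
    induction t with
    | zero => simp
    | succ t ih =>
      have : m + (t + 1) * c = (m + t * c) + c := by ring
      rw [this, hper, ih]
  have hpmod : ∀ m, f m = f (m % c) := by
    intro m
    conv_lhs => rw [← Nat.mod_add_div' m c]
    exact hpermul _ _
  have hinj : ∀ i j, i < c → j < c → f i = f j → i = j := by
    intro i j hi hj hije
    by_contra hne
    -- wlog i < j
    have key : ∀ i j, i < j → j < c → f i = f j → False := by
      intro i j hij hjc hfe
      have h1 : π^[i] (π^[j - i] A.start) = π^[i] A.start := by
        rw [← Function.iterate_add_apply]
        have : i + (j - i) = j := by omega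
        rw [this]; exact hfe.symm
      have h2 : π^[j - i] A.start = A.start := (hbij.injective.iterate i) h1
      exact Nat.find_min H (show j - i < c by omega) ⟨by omega, h2⟩
    rcases Nat.lt_or_ge i j with h | h
    · exact key i j h hj hije
    · exact key j i (by omega) hi hije.symm
  have hcard : Nat.card Q = c := by
    have hbij2 : Function.Bijective (fun i : Fin c => f i.val) := by
      constructor
      · intro i j hij
        exact Fin.ext (hinj i.val j.val i.isLt j.isLt hij)
      · intro q
        obtain ⟨m, hm⟩ := hsurj q
        refine ⟨⟨m % c, Nat.mod_lt m hc_pos⟩, ?_⟩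
        show f (m % c) = q
        rw [← hpmod]; exact hm
    have := Nat.card_eq_of_bijective _ hbij2
    simp [Nat.card_eq_fintype_card] at this
    omega
  refine ⟨hsurj, fun m m' => ?_⟩
  rw [hcard]
  constructor
  · intro h
    show m % c = m' % c
    apply hinj _ _ (Nat.mod_lt m hc_pos) (Nat.mod_lt m' hc_pos)
    rw [← hpmod, ← hpmod]; exact h
  · intro h
    show f m = f m'
    rw [hpmod m, hpmod m', h]

end UnaryAux
namespace UnaryAux

/-- A cyclic unary DFA with `N+1` states, accepting `a^m` iff some `m'` congruent to `m`
modulo `N+1` satisfies `a^{m'} ∈ L(A)`. -/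
noncomputable def unaryFactor {Q : Type} (A : DFA Unit Q) (N : ℕ) : FinDFA Unit where
  σ := ZMod (N + 1)
  M := { step := fun s _ => s + 1
         start := 0
         accept := {s | ∃ m : ℕ, (m : ZMod (N + 1)) = s ∧
           A.eval (List.replicate m ()) ∈ A.accept} }

theorem unaryFactor_card {Q : Type} (A : DFA Unit Q) (N : ℕ) :
    (unaryFactor A N).card = N + 1 := by
  simp [FinDFA.card, unaryFactor, Nat.card_eq_fintype_card, ZMod.card]

theorem unaryFactor_eval {Q : Type} (A : DFA Unit Q) (N : ℕ) (w : List Unit) :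
    (unaryFactor A N).M.eval w = (w.length : ZMod (N + 1)) := by
  have key : ∀ (m : ℕ), (fun s : ZMod (N + 1) => s + 1)^[m] 0 = (m : ZMod (N + 1)) := by
    intro m
    induction m with
    | zero => simp
    | succ m ih => rw [Function.iterate_succ_apply', ih]; push_cast; ring
  show (unaryFactor A N).M.evalFrom _ w = _
  rw [unary_evalFrom]
  exact key w.length

theorem unaryFactor_mem_accepts {Q : Type} (A : DFA Unit Q) (N : ℕ) (w : List Unit) :
    w ∈ (unaryFactor A N).accepts ↔
      ∃ m : ℕ, m ≡ w.length [MOD N + 1] ∧ A.eval (List.replicate m ()) ∈ A.accept := by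
  show w ∈ (unaryFactor A N).M.accepts ↔ _
  rw [DFA.mem_accepts, unaryFactor_eval]
  constructor
  · rintro ⟨m, hm, hacc⟩
    exact ⟨m, (ZMod.natCast_eq_natCast_iff _ _ _).mp hm, hacc⟩
  · rintro ⟨m, hm, hacc⟩
    exact ⟨m, (ZMod.natCast_eq_natCast_iff _ _ _).mpr hm, hacc⟩

end UnaryAux

/-- a trim permutation DFA over a one-letter alphabet `{a}` is `k`-factor
composite iff there is a set of at most `k` prime divisors of `|Q|` such that every
rejecting state is covered by the word `a^{|Q|/p}` for some `p` in the set. -/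
theorem unary_kFactorComposite_iff {Q : Type} [Finite Q] (A : DFA Unit Q)
    (htrim : Trim A) (hperm : IsPermutationDFA A) (k : ℕ) :
    IsKFactorComposite A k ↔
      ∃ P : Finset ℕ, P.card ≤ k ∧ (∀ p ∈ P, p.Prime ∧ p ∣ Nat.card Q) ∧
        ∀ q : Q, q ∉ A.accept →
          ∃ p ∈ P, WordCovers A (List.replicate (Nat.card Q / p) ()) q := by
  classical
  obtain ⟨hsurj, hiff⟩ := UnaryAux.unary_struct A htrim hperm
  set n := Nat.card Q with hn_def
  set π : Q → Q := fun q => A.step q () with hπ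
  set f : ℕ → Q := fun m => π^[m] A.start with hf
  have hQne : Nonempty Q := ⟨A.start⟩
  have hn : 0 < n := Nat.card_pos
  -- evaluation of `A` on replicate words
  have heval : ∀ m : ℕ, A.eval (List.replicate m ()) = f m := by
    intro m
    show A.evalFrom A.start _ = _
    rw [UnaryAux.unary_evalFrom]
    simp [hf, hπ]
  have hevalFrom : ∀ (m j : ℕ), A.evalFrom (f m) (List.replicate j ()) = f (j + m) := by
    intro m j
    rw [UnaryAux.unary_evalFrom]
    show (fun s => A.step s ())^[(List.replicate j ()).length] (π^[m] A.start) = π^[j + m] A.start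
    rw [Function.iterate_add_apply]
    simp [hπ]
  have hmemA : ∀ m : ℕ, List.replicate m () ∈ A.accepts ↔ f m ∈ A.accept := by
    intro m
    rw [DFA.mem_accepts, heval]
  constructor
  · rintro ⟨l, hlen, hsmall, hlang⟩
    have key : ∀ B ∈ l, ∃ p : ℕ, p.Prime ∧ p ∣ n ∧
        ∀ m' : ℕ, n ≤ m' → List.replicate m' () ∉ FinDFA.accepts B →
          WordCovers A (List.replicate (n / p) ()) (f m') := by
      intro B hB
      have hBcard : B.card < n := hsmall B hB
      haveI : Fintype B.σ := Fintype.ofFinite _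
      set g : ℕ → B.σ := fun m => (fun s => B.M.step s ())^[m] B.M.start with hg
      have hBeval : ∀ m : ℕ, B.M.eval (List.replicate m ()) = g m := by
        intro m
        show B.M.evalFrom _ _ = _
        rw [UnaryAux.unary_evalFrom]
        simp [hg]
      -- pigeonhole: the run of B enters a cycle of length ≤ B.card
      obtain ⟨i, j, hij, hgij⟩ :=
        Fintype.exists_ne_map_eq_of_card_lt (fun i : Fin (B.card + 1) => g i.val)
          (by
            simp only [Fintype.card_fin]
            rw [show B.card = Fintype.card B.σ from Nat.card_eq_fintype_card]
            omega)
      have hkey : ∃ i0 j0 : ℕ, i0 < j0 ∧ j0 ≤ B.card ∧ g i0 = g j0 := by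
        rcases (Fin.val_ne_of_ne hij).lt_or_gt with h | h
        · exact ⟨i.val, j.val, h, by omega, hgij⟩
        · exact ⟨j.val, i.val, h, by omega, hgij.symm⟩
      obtain ⟨i0, j0, hij0, hj0, hg0⟩ := hkey
      set c := j0 - i0 with hc_def
      have hc0 : 0 < c := by omega
      have hcB : c ≤ B.card := by omega
      have hsplit : ∀ a b : ℕ, g (a + b) = (fun s => B.M.step s ())^[a] (g b) :=
        fun a b => Function.iterate_add_apply _ a b _
      have per : ∀ m, i0 ≤ m → g (m + c) = g m := by
        intro m hm
        have e1 : m + c = (m - i0) + j0 := by omega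
        have e2 : m = (m - i0) + i0 := by omega
        rw [e1, hsplit, ← hg0, ← hsplit, ← e2]
      have permul : ∀ t m, i0 ≤ m → g (m + t * c) = g m := by
        intro t
        induction t with
        | zero => simp
        | succ t ih =>
          intro m hm
          have e : m + (t + 1) * c = (m + t * c) + c := by ring
          rw [e, per _ (by omega), ih m hm]
      set d := Nat.gcd c n with hd_def
      have hd0 : 0 < d := Nat.gcd_pos_of_pos_right _ hn
      have hdn : d ∣ n := Nat.gcd_dvd_right c n
      have hdlt : d < n := lt_of_le_of_lt (Nat.le_trans (Nat.gcd_le_left n hc0) hcB) hBcard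
      have hmul : d * (n / d) = n := Nat.mul_div_cancel' hdn
      have hnd1 : 1 < n / d := by
        rcases Nat.lt_or_ge (n / d) 2 with h | h
        · interval_cases h' : n / d <;> omega
        · omega
      set p := (n / d).minFac with hp_def
      have hpp : p.Prime := Nat.minFac_prime (by omega)
      have hpdvd : p ∣ n / d := Nat.minFac_dvd _
      have hpn : p ∣ n := hpdvd.trans (Nat.div_dvd_of_dvd hdn)
      have hdnp : d ∣ n / p := by
        refine ⟨(n / d) / p, ?_⟩
        rw [← Nat.mul_div_assoc d hpdvd, hmul]
      have hnp_pos : 0 < n / p := Nat.div_pos (Nat.le_of_dvd hn hpn) hpp.pos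
      have hnp_lt : n / p < n := Nat.div_lt_self hn hpp.one_lt
      refine ⟨p, hpp, hpn, ?_⟩
      intro m' hm' hrej
      have hi0m' : i0 ≤ m' := by omega
      have hgrej : g m' ∉ B.M.accept := by
        intro h
        exact hrej (by rw [FinDFA.accepts, DFA.mem_accepts, hBeval]; exact h)
      -- all states f (m' + t * d) are rejecting
      have claim : ∀ t : ℕ, f (m' + t * d) ∉ A.accept := by
        intro t
        set x := Nat.gcdA c n with hx_def
        set y := Nat.gcdB c n with hy_def
        have hbez : (d : ℤ) = c * x + n * y := Nat.gcd_eq_gcd_ab c n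
        set s := ((t * x : ℤ) % n).toNat with hs_def
        have hs : (s : ℤ) = (t * x : ℤ) % n :=
          Int.toNat_of_nonneg (Int.emod_nonneg _ (by exact_mod_cast hn.ne'))
        have h1 : (s : ℤ) ≡ t * x [ZMOD (n : ℤ)] := by
          show (s : ℤ) % n = (t * x : ℤ) % n
          rw [hs, Int.emod_emod_of_dvd _ dvd_rfl]
        have h2 : (s * c : ℤ) ≡ t * x * c [ZMOD (n : ℤ)] := h1.mul_right c
        have h3 : (t * x * c : ℤ) ≡ t * d [ZMOD (n : ℤ)] := by
          rw [Int.modEq_iff_dvd]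
          exact ⟨t * y, by rw [hbez]; ring⟩
        have hsc : (s * c : ℤ) ≡ t * d [ZMOD (n : ℤ)] := h2.trans h3
        have hnat : m' + s * c ≡ m' + t * d [MOD n] := by
          rw [Nat.modEq_iff_dvd]
          have := (hsc.add_left (m' : ℤ)).dvd
          push_cast
          exact this
        have hfq : f (m' + t * d) = f (m' + s * c) := (hiff _ _).mpr hnat.symm
        have hgeq : g (m' + s * c) = g m' := permul s m' hi0m'
        have hrej2 : List.replicate (m' + s * c) () ∉ FinDFA.accepts B := by
          intro h
          rw [FinDFA.accepts, DFA.mem_accepts, hBeval, hgeq] at h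
          exact hgrej h
        have hrejA : List.replicate (m' + s * c) () ∉ A.accepts := by
          intro h
          exact hrej2 ((hlang _).mp h B hB)
        rw [hmemA] at hrejA
        rw [hfq]
        exact hrejA
      constructor
      · -- the word a^{n/p} moves f m'
        rw [hevalFrom]
        intro h
        have := (hiff _ _).mp h
        have h0 : n / p ≡ 0 [MOD n] := by
          have h' : n / p + m' ≡ 0 + m' [MOD n] := by simpa using this
          exact Nat.ModEq.add_right_cancel' m' h'
        have := (Nat.modEq_zero_iff_dvd).mp h0
        have := Nat.le_of_dvd hnp_pos this
        omega
      · intro kk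
        rw [UnaryAux.wpow_replicate, hevalFrom]
        obtain ⟨e, he⟩ := hdnp
        have heq : kk * (n / p) + m' = m' + (kk * e) * d := by rw [he]; ring
        rw [heq]
        exact claim (kk * e)
    choose! pfn hp1 hp2 hp3 using key
    refine ⟨(l.map pfn).toFinset, ?_, ?_, ?_⟩
    · exact le_trans (List.toFinset_card_le _) (by simpa using hlen)
    · intro p hp
      rw [List.mem_toFinset] at hp
      obtain ⟨B, hB, rfl⟩ := List.mem_map.mp hp
      exact ⟨hp1 B hB, hp2 B hB⟩
    · intro q hq
      obtain ⟨m, hm⟩ := hsurj q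
      have hfm : f (m + n) = q := by
        rw [← hm]
        apply (hiff _ _).mpr
        show (m + n) % n = m % n
        simp
      have hrejA : List.replicate (m + n) () ∉ A.accepts := by
        rw [hmemA, hfm]; exact hq
      have hnot : ¬ ∀ B ∈ l, List.replicate (m + n) () ∈ FinDFA.accepts B :=
        fun h => hrejA ((hlang _).mpr h)
      push_neg at hnot
      obtain ⟨B, hB, hrejB⟩ := hnot
      refine ⟨pfn B, List.mem_toFinset.mpr (List.mem_map.mpr ⟨B, hB, rfl⟩), ?_⟩
      have := hp3 B hB (m + n) (by omega) hrejB
      rwa [hfm] at this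
  · rintro ⟨P, hPk, hPdvd, hPcov⟩
    refine ⟨P.toList.map (fun p => UnaryAux.unaryFactor A (n / p - 1)), ?_, ?_, ?_⟩
    · simp [hPk]
    · -- all factors are smaller
      intro B hB
      simp only [List.mem_map, Finset.mem_toList] at hB
      obtain ⟨p, hp, rfl⟩ := hB
      obtain ⟨hpp, hpdvd⟩ := hPdvd p hp
      have h1 : 1 ≤ n / p := Nat.div_pos (Nat.le_of_dvd hn hpdvd) hpp.pos
      rw [UnaryAux.unaryFactor_card]
      have : n / p - 1 + 1 = n / p := by omega
      rw [this]
      exact Nat.div_lt_self hn hpp.one_lt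
    · -- language equivalence
      intro w
      have hw : w = List.replicate w.length () := UnaryAux.list_unit_eq w
      constructor
      · intro hacc B hB
        simp only [List.mem_map, Finset.mem_toList] at hB
        obtain ⟨p, hp, rfl⟩ := hB
        rw [UnaryAux.unaryFactor_mem_accepts]
        exact ⟨w.length, Nat.ModEq.refl _, by rw [← hw]; exact hacc⟩
      · intro hall
        rw [DFA.mem_accepts]
        by_contra hq
        -- f w.length is a rejecting state
        set m := w.length with hm_def
        have hfm : A.eval w = f m := by rw [hw]; exact heval m
        rw [hfm] at hq
        obtain ⟨p, hp, hcov⟩ := hPcov (f m) hq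
        obtain ⟨hpp, hpdvd⟩ := hPdvd p hp
        have h1 : 1 ≤ n / p := Nat.div_pos (Nat.le_of_dvd hn hpdvd) hpp.pos
        have hN1 : n / p - 1 + 1 = n / p := by omega
        have hmem : UnaryAux.unaryFactor A (n / p - 1) ∈
            P.toList.map (fun p => UnaryAux.unaryFactor A (n / p - 1)) :=
          List.mem_map.mpr ⟨p, Finset.mem_toList.mpr hp, rfl⟩
        have := hall _ hmem
        rw [UnaryAux.unaryFactor_mem_accepts, hN1] at this
        obtain ⟨m', hm'cong, hm'acc⟩ := this
        rw [heval] at hm'acc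
        -- m'' = m' + m * n is ≥ m, congruent to m mod n/p, and f m'' = f m'
        set m'' := m' + m * n with hm''_def
        have hge : m ≤ m'' := le_trans (Nat.le_mul_of_pos_right m hn) (Nat.le_add_left _ _)
        have hdvdn : (n / p) ∣ n := Nat.div_dvd_of_dvd hpdvd
        have hcong : m ≡ m'' [MOD n / p] := by
          have h2 : m'' ≡ m' [MOD n] := by
            show m'' % n = m' % n
            simp [hm''_def, Nat.add_mul_mod_self_right]
          exact ((Nat.ModEq.of_dvd hdvdn h2).trans hm'cong).symm
        have hdvd2 : (n / p) ∣ (m'' - m) := (Nat.modEq_iff_dvd' hge).mp hcong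
        set lam := (m'' - m) / (n / p) with hlam_def
        have hlam : m + lam * (n / p) = m'' := by
          rw [hlam_def, Nat.div_mul_cancel hdvd2]
          omega
        have hrej := hcov.2 lam
        rw [UnaryAux.wpow_replicate, hevalFrom] at hrej
        have hfeq : f (lam * (n / p) + m) = f m' := by
          rw [hiff]
          show (lam * (n / p) + m) % n = m' % n
          have : lam * (n / p) + m = m'' := by omega
          rw [this, hm''_def]
          simp [Nat.add_mul_mod_self_right]
        rw [hfeq] at hrej
        exact hrej hm'acc
end

section
/- Let A = ⟨{a},Q,q_I,δ,F⟩ be a trim permutation DFA over a one-letter alphabet, and let i₁, i₂ be positive integers with i₁ dividing i₂ and i₂ < |Q|. Then every rejecting state of A covered by the word a^{i₁} is also covered by the word a^{i₂}. -/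
open Set

section Aux

lemma evalFrom_replicate {Q : Type} (A : DFA Unit Q) (n : ℕ) (q : Q) :
    A.evalFrom q (List.replicate n ()) = (fun q => A.step q ())^[n] q := by
  induction n generalizing q with
  | zero => rfl
  | succ n ih =>
    rw [List.replicate_succ]
    show A.evalFrom (A.step q ()) (List.replicate n ()) = _
    rw [ih, Function.iterate_succ_apply]

lemma wpow_replicate (i k : ℕ) :
    wpow (List.replicate i ()) k = List.replicate (i * k) () := by
  induction k with
  | zero => simp [wpow]
  | succ k ih =>
    show List.replicate i () ++ _ = _
    rw [ih, ← List.replicate_add, Nat.mul_succ, Nat.add_comm]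

end Aux

/-- in a trim permutation DFA over a one-letter alphabet `{a}`, if
`i₁ ∣ i₂` with `i₁, i₂` positive and `i₂ < |Q|`, then every rejecting state covered by
`a^{i₁}` is also covered by `a^{i₂}`. -/
theorem unary_cover_dvd {Q : Type} [Finite Q] (A : DFA Unit Q)
    (htrim : Trim A) (hperm : IsPermutationDFA A)
    (i₁ i₂ : ℕ) (h₁ : 0 < i₁) (h₂ : 0 < i₂) (hdvd : i₁ ∣ i₂) (hlt : i₂ < Nat.card Q)
    (q : Q) (hq : q ∉ A.accept)
    (hcov : WordCovers A (List.replicate i₁ ()) q) :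
    WordCovers A (List.replicate i₂ ()) q := by
  obtain ⟨c, hc⟩ := hdvd
  set f : Q → Q := fun q => A.step q () with hf
  have hbij : Function.Bijective f := hperm ()
  set e : Equiv.Perm Q := Equiv.ofBijective f hbij with he
  have hepow : ∀ (n : ℕ) (x : Q), (e ^ n) x = f^[n] x := by
    intro n
    induction n with
    | zero => intro x; rfl
    | succ n ih =>
      intro x
      rw [pow_succ, Equiv.Perm.mul_apply, Function.iterate_succ_apply]
      exact ih (f x)
  have keyeval : ∀ w : List Unit, A.eval w = (e ^ w.length) A.start := by
    intro w
    have hrepl : w = List.replicate w.length () := by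
      rw [List.eq_replicate_length]; intro b _; rfl
    show A.evalFrom A.start w = _
    rw [hepow, ← evalFrom_replicate]
    congr 1
  constructor
  · -- f^[i₂] q ≠ q
    rw [evalFrom_replicate]
    intro hfix
    have hfix' : (e ^ i₂) q = q := by rw [hepow]; exact hfix
    obtain ⟨w, hw⟩ := htrim q
    have hq0 : q = (e ^ w.length) A.start := by rw [← hw, keyeval]
    set n₀ := w.length
    have hN : orderOf e > 0 := orderOf_pos e
    set N := orderOf e
    have hstart : A.start = (e ^ (N * n₀ - n₀)) q := by
      rw [hq0, ← Equiv.Perm.mul_apply, ← pow_add]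
      have hle : n₀ ≤ N * n₀ := Nat.le_mul_of_pos_left n₀ hN
      have : N * n₀ - n₀ + n₀ = N * n₀ := by omega
      rw [this, pow_mul, pow_orderOf_eq_one, one_pow, Equiv.Perm.one_apply]
    have hit : ∀ t : ℕ, (e ^ (i₂ * t)) q = q := by
      intro t
      induction t with
      | zero => simp
      | succ t ih =>
        rw [Nat.mul_succ, pow_add, Equiv.Perm.mul_apply, hfix', ih]
    have hper : ∀ m : ℕ, (e ^ m) q = (e ^ (m % i₂)) q := by
      intro m
      conv_lhs => rw [← Nat.mod_add_div m i₂]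
      rw [pow_add, Equiv.Perm.mul_apply, hit]
    have hsurj : Function.Surjective (fun j : Fin i₂ => (e ^ (j : ℕ)) q) := by
      intro s
      obtain ⟨ws, hws⟩ := htrim s
      refine ⟨⟨(ws.length + (N * n₀ - n₀)) % i₂, Nat.mod_lt _ h₂⟩, ?_⟩
      simp only
      rw [← hper, pow_add, Equiv.Perm.mul_apply, ← hstart, ← keyeval, hws]
    have := Nat.card_le_card_of_surjective _ hsurj
    simp only [Nat.card_eq_fintype_card, Fintype.card_fin] at this
    omega
  · intro k
    rw [wpow_replicate]
    have h := hcov.2 (c * k)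
    rw [wpow_replicate] at h
    rwa [hc, mul_assoc]
end

section
/- Let n, m ≥ 1, S = {1,…,n}, let C_1,…,C_m be nonempty subsets of S, let k ∈ ℕ, and let μ, τ be primes with 2 < μ, n < μ, m < τ and μ < τ. Then the hitting-set DFA A built from this data is (k+1)-factor composite if and only if there exists a subset X ⊆ S with |X| ≤ k and X ∩ C_i ≠ ∅ for all 1 ≤ i ≤ m. -/
open Set

/-- The rejecting states `R_⊥` of the hitting-set DFA: fourth coordinate `0`, third
coordinate equal to `i` for some `1 ≤ i ≤ m` (here `i = i₀ + 1` for `i₀ : Fin m`), and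
second coordinate `v` times the first, for some `v ∈ C i`. -/
def Rbot (μ τ m : ℕ) (C : Fin m → Finset ℕ) : Set (ZMod μ × ZMod μ × ZMod τ × ZMod 2) :=
  {q | q.2.2.2 = 0 ∧ ∃ i : Fin m, q.2.2.1 = (((i : ℕ) + 1 : ℕ) : ZMod τ) ∧
        ∃ v ∈ C i, q.2.1 = (v : ZMod μ) * q.1}

/-- The rejecting states `R_⊤` of the hitting-set DFA. -/
def Rtop (μ τ m : ℕ) (C : Fin m → Finset ℕ) : Set (ZMod μ × ZMod μ × ZMod τ × ZMod 2) :=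
  {q | q.2.2.2 = 1 ∧ q.1 ≠ 0 ∧ q.2.1 ≠ 0 ∧ (q.1, q.2.1, q.2.2.1, (0 : ZMod 2)) ∈ Rbot μ τ m C}

/-- The hitting-set DFA over the alphabet `{a, b, c, d}` (encoded as `Fin 4`, with
`a = 0`, `b = 1`, `c = 2`, `d = 3`): the letters `a`, `b`, `c`, `d` increment the first,
second, third, fourth coordinate respectively. -/
def hitDFA (μ τ m : ℕ) (C : Fin m → Finset ℕ) :
    DFA (Fin 4) (ZMod μ × ZMod μ × ZMod τ × ZMod 2) where
  step q x :=
    if x = 0 then (q.1 + 1, q.2.1, q.2.2.1, q.2.2.2)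
    else if x = 1 then (q.1, q.2.1 + 1, q.2.2.1, q.2.2.2)
    else if x = 2 then (q.1, q.2.1, q.2.2.1 + 1, q.2.2.2)
    else (q.1, q.2.1, q.2.2.1, q.2.2.2 + 1)
  start := (0, 0, 0, 0)
  accept := (Rbot μ τ m C ∪ Rtop μ τ m C)ᶜ

/-- A word over `{a, b, c, d}` is concise if each letter occurs fewer times than the size
of the cycle it induces. -/
def Concise (μ τ : ℕ) (u : List (Fin 4)) : Prop :=
  u.count 0 < μ ∧ u.count 1 < μ ∧ u.count 2 < τ ∧ u.count 3 < 2


/-! ### Auxiliary machinery for the proof -/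

section HitAux

lemma add_G {μ τ : ℕ} (x a : ZMod μ) (y b : ZMod μ) (z c : ZMod τ) (w d : ZMod 2) :
    ((x, y, z, w) : ZMod μ × ZMod μ × ZMod τ × ZMod 2) + (a, b, c, d)
      = (x + a, y + b, z + c, w + d) := rfl

lemma prod_eta {μ τ : ℕ} (h : ZMod μ × ZMod μ × ZMod τ × ZMod 2) :
    ((h.1, h.2.1, h.2.2.1, h.2.2.2) : ZMod μ × ZMod μ × ZMod τ × ZMod 2) = h := rfl

lemma smul_G {μ τ : ℕ} (t : ℕ) (a b : ZMod μ) (c : ZMod τ) (d : ZMod 2) :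
    t • ((a, b, c, d) : ZMod μ × ZMod μ × ZMod τ × ZMod 2)
      = ((t : ZMod μ) * a, (t : ZMod μ) * b, (t : ZMod τ) * c, (t : ZMod 2) * d) := by
  simp [Prod.smul_def, nsmul_eq_mul]

lemma zmod2_cases (x : ZMod 2) : x = 0 ∨ x = 1 := by revert x; decide

section Hit
variable (μ τ m : ℕ) (C : Fin m → Finset ℕ)

def cntQ (w : List (Fin 4)) : ZMod μ × ZMod μ × ZMod τ × ZMod 2 :=
  ((w.count 0 : ZMod μ), (w.count 1 : ZMod μ), (w.count 2 : ZMod τ), (w.count 3 : ZMod 2))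

lemma cntQ_nil : cntQ μ τ [] = 0 := by simp [cntQ, Prod.ext_iff]

lemma cntQ_append (u v : List (Fin 4)) : cntQ μ τ (u ++ v) = cntQ μ τ u + cntQ μ τ v := by
  simp [cntQ, Prod.ext_iff, List.count_append]

lemma hit_evalFrom (q : ZMod μ × ZMod μ × ZMod τ × ZMod 2) (w : List (Fin 4)) :
    (hitDFA μ τ m C).evalFrom q w = q + cntQ μ τ w := by
  induction w generalizing q with
  | nil => simp [cntQ_nil, DFA.evalFrom]
  | cons x w ih =>
    have h0 : (hitDFA μ τ m C).evalFrom q (x :: w)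
        = (hitDFA μ τ m C).evalFrom ((hitDFA μ τ m C).step q x) w := rfl
    rw [h0, ih]
    have hs : (hitDFA μ τ m C).step q x = q + cntQ μ τ [x] := by
      fin_cases x <;> simp [hitDFA, cntQ, Prod.ext_iff]
    rw [hs]
    have h1 : cntQ μ τ (x :: w) = cntQ μ τ [x] + cntQ μ τ w := by
      rw [show (x :: w) = [x] ++ w from rfl, cntQ_append]
    rw [h1, add_assoc]

lemma hit_mem_accepts (w : List (Fin 4)) :
    w ∈ (hitDFA μ τ m C).accepts ↔ cntQ μ τ w ∉ Rbot μ τ m C ∪ Rtop μ τ m C := by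
  rw [DFA.mem_accepts]
  have h : (hitDFA μ τ m C).eval w = cntQ μ τ w := by
    rw [DFA.eval, hit_evalFrom]
    show (0 : ZMod μ × ZMod μ × ZMod τ × ZMod 2) + _ = _
    rw [zero_add]
  rw [h]; rfl

variable [NeZero μ] [NeZero τ]

def repW (g : ZMod μ × ZMod μ × ZMod τ × ZMod 2) : List (Fin 4) :=
  List.replicate g.1.val 0 ++ List.replicate g.2.1.val 1 ++
    List.replicate g.2.2.1.val 2 ++ List.replicate g.2.2.2.val 3

lemma cntQ_repW (g : ZMod μ × ZMod μ × ZMod τ × ZMod 2) : cntQ μ τ (repW μ τ g) = g := by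
  simp [cntQ, repW, List.count_append, List.count_replicate, Prod.ext_iff,
    ZMod.natCast_zmod_val]

end Hit

section Factors
variable (μ τ m : ℕ) [NeZero μ] [NeZero τ] (C : Fin m → Finset ℕ)

/-- factor tracking the first three coordinates -/
def eDFA : FinDFA (Fin 4) where
  σ := ZMod μ × ZMod μ × ZMod τ
  M := { step := fun q x =>
            if x = 0 then (q.1 + 1, q.2.1, q.2.2)
            else if x = 1 then (q.1, q.2.1 + 1, q.2.2)
            else if x = 2 then (q.1, q.2.1, q.2.2 + 1)
            else q
         start := 0
         accept := {q | ¬ (q.1 ≠ 0 ∧ ∃ i : Fin m, q.2.2 = (((i : ℕ) + 1 : ℕ) : ZMod τ) ∧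
            ∃ v ∈ C i, q.2.1 = (v : ZMod μ) * q.1)} }

/-- factor tracking `β - vα` and the last two coordinates -/
def dDFA (v : ℕ) : FinDFA (Fin 4) where
  σ := ZMod μ × ZMod τ × ZMod 2
  M := { step := fun q x =>
            if x = 0 then (q.1 - v, q.2)
            else if x = 1 then (q.1 + 1, q.2)
            else if x = 2 then (q.1, q.2.1 + 1, q.2.2)
            else (q.1, q.2.1, q.2.2 + 1)
         start := 0
         accept := {q | ¬ (q.1 = 0 ∧ (∃ i : Fin m, q.2.1 = (((i : ℕ) + 1 : ℕ) : ZMod τ) ∧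
            v ∈ C i) ∧ q.2.2 = 0)} }

lemma eDFA_evalFrom (q : ZMod μ × ZMod μ × ZMod τ) (w : List (Fin 4)) :
    (eDFA μ τ m C).M.evalFrom q w
      = (q.1 + (w.count 0 : ZMod μ), q.2.1 + (w.count 1 : ZMod μ), q.2.2 + (w.count 2 : ZMod τ)) := by
  induction w generalizing q with
  | nil => simp [Prod.ext_iff, DFA.evalFrom]; rfl
  | cons x w ih =>
    show (eDFA μ τ m C).M.evalFrom ((eDFA μ τ m C).M.step q x) w = _
    erw [ih]
    fin_cases x <;> simp [eDFA, List.count_cons, Prod.ext_iff] <;> push_cast <;> ring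

lemma dDFA_evalFrom (v : ℕ) (q : ZMod μ × ZMod τ × ZMod 2) (w : List (Fin 4)) :
    (dDFA μ τ m C v).M.evalFrom q w
      = (q.1 + (w.count 1 : ZMod μ) - (w.count 0 : ZMod μ) * v,
         q.2.1 + (w.count 2 : ZMod τ), q.2.2 + (w.count 3 : ZMod 2)) := by
  induction w generalizing q with
  | nil => simp [Prod.ext_iff, DFA.evalFrom]; rfl
  | cons x w ih =>
    show (dDFA μ τ m C v).M.evalFrom ((dDFA μ τ m C v).M.step q x) w = _
    erw [ih]
    fin_cases x <;> simp [dDFA, List.count_cons, Prod.ext_iff] <;> push_cast <;> ring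

lemma eDFA_mem_accepts (w : List (Fin 4)) :
    w ∈ (eDFA μ τ m C).accepts ↔
      ¬ (((w.count 0 : ℕ) : ZMod μ) ≠ 0 ∧ ∃ i : Fin m,
          ((w.count 2 : ℕ) : ZMod τ) = (((i : ℕ) + 1 : ℕ) : ZMod τ) ∧
          ∃ v ∈ C i, ((w.count 1 : ℕ) : ZMod μ) = (v : ZMod μ) * ((w.count 0 : ℕ) : ZMod μ)) := by
  change (eDFA μ τ m C).M.eval w ∈ (eDFA μ τ m C).M.accept ↔ _
  erw [DFA.eval, eDFA_evalFrom]
  simp [eDFA]; exact Iff.rfl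

lemma dDFA_mem_accepts (v : ℕ) (w : List (Fin 4)) :
    w ∈ (dDFA μ τ m C v).accepts ↔
      ¬ (((w.count 1 : ℕ) : ZMod μ) - ((w.count 0 : ℕ) : ZMod μ) * v = 0 ∧
          (∃ i : Fin m, ((w.count 2 : ℕ) : ZMod τ) = (((i : ℕ) + 1 : ℕ) : ZMod τ) ∧ v ∈ C i) ∧
          ((w.count 3 : ℕ) : ZMod 2) = 0) := by
  change (dDFA μ τ m C v).M.eval w ∈ (dDFA μ τ m C v).M.accept ↔ _
  erw [DFA.eval, dDFA_evalFrom]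
  simp [dDFA]; exact Iff.rfl

lemma eDFA_card : (eDFA μ τ m C).card = μ * (μ * τ) := by
  simp [FinDFA.card, eDFA, Nat.card_prod, Nat.card_zmod]

lemma dDFA_card (v : ℕ) : (dDFA μ τ m C v).card = μ * (τ * 2) := by
  simp [FinDFA.card, dDFA, Nat.card_prod, Nat.card_zmod]

end Factors

lemma sum_map_le {A : Type*} (l : List A) (f g : A → ℕ) (h : ∀ a ∈ l, f a ≤ g a) :
    (l.map f).sum ≤ (l.map g).sum := by
  induction l with
  | nil => simp
  | cons b t ih =>
    simp only [List.map_cons, List.sum_cons]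
    have h1 := h b (List.mem_cons_self (a := b) (l := t))
    have h2 := ih (fun a ha => h a (List.mem_cons_of_mem _ ha))
    omega

lemma eq_of_sum_le {A : Type*} (l : List A) (f g : A → ℕ) (h : ∀ a ∈ l, f a ≤ g a)
    (h2 : (l.map g).sum ≤ (l.map f).sum) : ∀ a ∈ l, g a ≤ f a := by
  induction l with
  | nil => intro a ha; cases ha
  | cons b t ih =>
    intro a ha
    simp only [List.map_cons, List.sum_cons] at h2
    have hfb := h b (List.mem_cons_self (a := b) (l := t))
    have hsum := sum_map_le t f g (fun x hx => h x (List.mem_cons_of_mem _ hx))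
    rcases List.mem_cons.mp ha with rfl | hat
    · omega
    · exact ih (fun x hx => h x (List.mem_cons_of_mem _ hx)) (by omega) a hat

section Key
variable (μ τ m : ℕ) [NeZero μ] [NeZero τ] (C : Fin m → Finset ℕ)

local notation "G" => (ZMod μ × ZMod μ × ZMod τ × ZMod 2)

lemma key_cover (l : List (FinDFA (Fin 4)))
    (hsz : ∀ B ∈ l, B.card < Nat.card G)
    (hiff : ∀ w, w ∈ (hitDFA μ τ m C).accepts ↔ ∀ B ∈ l, w ∈ FinDFA.accepts B) :
    ∃ hf : FinDFA (Fin 4) → G,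
      (∀ B ∈ l, hf B ≠ 0) ∧
      ∀ g ∈ Rbot μ τ m C ∪ Rtop μ τ m C, ∃ B ∈ l,
        ∀ t : ℕ, g + t • hf B ∈ Rbot μ τ m C ∪ Rtop μ τ m C := by
  classical
  set R := Rbot μ τ m C ∪ Rtop μ τ m C with hR
  -- the sets of counts of words leading B to state p
  let U : (B : FinDFA (Fin 4)) → B.σ → Set G :=
    fun B p => {g | ∃ w, B.M.eval w = p ∧ cntQ μ τ w = g}
  have hUmono : ∀ (B : FinDFA (Fin 4)) (p : B.σ) (u : List (Fin 4)), ∀ g ∈ U B p,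
      g + cntQ μ τ u ∈ U B (B.M.evalFrom p u) := by
    rintro B p u g ⟨w, hw, hc⟩
    exact ⟨w ++ u, by rw [DFA.eval, DFA.evalFrom_of_append, ← DFA.eval, hw],
      by rw [cntQ_append, hc]⟩
  have hevapp : ∀ (B : FinDFA (Fin 4)) (w u : List (Fin 4)),
      B.M.eval (w ++ u) = B.M.evalFrom (B.M.eval w) u := by
    intro B w u; rw [DFA.eval, DFA.evalFrom_of_append, ← DFA.eval]
  -- maximize the sum of sizes
  let msum : List (Fin 4) → ℕ := fun w => (l.map (fun B => (U B (B.M.eval w)).ncard)).sum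
  have hbdd : BddAbove (Set.range msum) := by
    refine ⟨l.length * Nat.card G, ?_⟩
    rintro x ⟨w, rfl⟩
    have : ∀ y ∈ l.map (fun B => (U B (B.M.eval w)).ncard), y ≤ Nat.card G := by
      intro y hy
      obtain ⟨B, _, rfl⟩ := List.mem_map.mp hy
      calc (U B (B.M.eval w)).ncard ≤ (Set.univ : Set G).ncard :=
            Set.ncard_le_ncard (Set.subset_univ _) (Set.toFinite _)
        _ = Nat.card G := Set.ncard_univ _
    calc msum w ≤ (l.map (fun B => (U B (B.M.eval w)).ncard)).length * Nat.card G :=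
          List.sum_le_card_nsmul _ _ this
      _ = l.length * Nat.card G := by rw [List.length_map]
  obtain ⟨wstar, hwstar⟩ : ∃ w, ∀ w', msum w' ≤ msum w := by
    have hmem := Nat.sSup_mem (Set.range_nonempty msum) hbdd
    obtain ⟨w, hw⟩ := hmem
    exact ⟨w, fun w' => hw ▸ le_csSup hbdd (Set.mem_range_self w')⟩
  -- key equality
  have hkey : ∀ B ∈ l, ∀ u : List (Fin 4),
      U B (B.M.eval (wstar ++ u)) = (fun g => g + cntQ μ τ u) '' U B (B.M.eval wstar) := by
    intro B hB u
    have hsub : (fun g => g + cntQ μ τ u) '' U B (B.M.eval wstar) ⊆ U B (B.M.eval (wstar ++ u)) := by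
      rintro x ⟨g, hg, rfl⟩
      rw [hevapp]
      exact hUmono B _ u g hg
    have hptle : ∀ B' ∈ l, (U B' (B'.M.eval wstar)).ncard ≤ (U B' (B'.M.eval (wstar ++ u))).ncard := by
      intro B' hB'
      have : (fun g => g + cntQ μ τ u) '' U B' (B'.M.eval wstar) ⊆ U B' (B'.M.eval (wstar ++ u)) := by
        rintro x ⟨g, hg, rfl⟩
        rw [hevapp]
        exact hUmono B' _ u g hg
      calc (U B' (B'.M.eval wstar)).ncard
          = ((fun g => g + cntQ μ τ u) '' U B' (B'.M.eval wstar)).ncard :=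
            (Set.ncard_image_of_injective _ (add_left_injective _)).symm
        _ ≤ _ := Set.ncard_le_ncard this (Set.toFinite _)
    have hle := eq_of_sum_le l (fun B' => (U B' (B'.M.eval wstar)).ncard)
      (fun B' => (U B' (B'.M.eval (wstar ++ u))).ncard) hptle (hwstar (wstar ++ u)) B hB
    have hcard : (U B (B.M.eval (wstar ++ u))).ncard
        ≤ ((fun g => g + cntQ μ τ u) '' U B (B.M.eval wstar)).ncard := by
      rw [Set.ncard_image_of_injective _ (add_left_injective _)]
      exact hle
    exact (Set.eq_of_subset_of_ncard_le hsub hcard (Set.toFinite _)).symm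
  set V : FinDFA (Fin 4) → Set G := fun B => U B (B.M.eval wstar) with hV
  have hVw : ∀ B, cntQ μ τ wstar ∈ V B := fun B => ⟨wstar, rfl, rfl⟩
  -- nontrivial stabilizer
  have hstab : ∀ B ∈ l, ∃ h : G, h ≠ 0 ∧ (fun g => g + h) '' V B = V B := by
    intro B hB
    by_contra hno
    push_neg at hno
    have hinj : Function.Injective (fun g : G => B.M.eval (wstar ++ repW μ τ g)) := by
      intro g g' he
      have h1 : U B (B.M.eval (wstar ++ repW μ τ g)) = (fun x => x + g) '' V B := by
        rw [hkey B hB, cntQ_repW]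
      have h2 : U B (B.M.eval (wstar ++ repW μ τ g')) = (fun x => x + g') '' V B := by
        rw [hkey B hB, cntQ_repW]
      simp only at he
      rw [he, h2] at h1
      -- h1 : (fun x => x + g') '' V B = (fun x => x + g) '' V B
      have h3 : (fun x : G => x + (g - g')) '' V B = V B := by
        have e1 : (fun x : G => x + (g - g')) '' V B
            = (fun x : G => x + (-g')) '' ((fun x : G => x + g) '' V B) := by
          rw [Set.image_image]
          have e0 : (fun x : G => x + (g - g')) = (fun x : G => x + g + -g') := by
            funext x; ring
          rw [e0]
        rw [e1, ← h1]
        rw [Set.image_image]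
        have e2 : (fun x : G => x + g' + -g') = fun x : G => x := by funext x; ring
        rw [e2, Set.image_id']
      by_contra hne
      exact (hno (g - g')) (sub_ne_zero.mpr hne) h3
    have hc := Nat.card_le_card_of_injective _ hinj
    have := hsz B hB
    rw [FinDFA.card] at this
    omega
  choose hfn hfne hfstab using hstab
  let hf : FinDFA (Fin 4) → G := fun B => if hB : B ∈ l then hfn B hB else 0
  have hfne' : ∀ B ∈ l, hf B ≠ 0 := by
    intro B hB
    simp only [hf, dif_pos hB]
    exact hfne B hB
  have hfstab' : ∀ B ∈ l, (fun g => g + hf B) '' V B = V B := by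
    intro B hB
    simp only [hf, dif_pos hB]
    exact hfstab B hB
  have hstabt : ∀ B ∈ l, ∀ t : ℕ, (fun g => g + t • hf B) '' V B = V B := by
    intro B hB t
    induction t with
    | zero => simp
    | succ t ih =>
      have e1 : (fun g : G => g + (t + 1) • hf B)
          = (fun g : G => g + hf B) ∘ (fun g : G => g + t • hf B) := by
        funext x
        simp only [Function.comp_apply, succ_nsmul]
        ring
      rw [e1, Set.image_comp, ih, hfstab' B hB]
  refine ⟨hf, hfne', ?_⟩
  intro g hg
  set W := wstar ++ repW μ τ (g - cntQ μ τ wstar) with hW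
  have hcW : cntQ μ τ W = g := by
    rw [hW, cntQ_append, cntQ_repW]
    ring
  have hWrej : W ∉ (hitDFA μ τ m C).accepts := by
    rw [hit_mem_accepts, hcW]
    exact fun h => h hg
  obtain ⟨B, hB, hWB⟩ : ∃ B ∈ l, W ∉ FinDFA.accepts B := by
    by_contra hco
    push_neg at hco
    exact hWrej ((hiff W).mpr hco)
  refine ⟨B, hB, ?_⟩
  intro t
  have hUR : ∀ g' ∈ U B (B.M.eval W), g' ∈ R := by
    rintro g' ⟨w', hw', hc'⟩
    have hw'rej : w' ∉ FinDFA.accepts B := by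
      show B.M.eval w' ∉ B.M.accept
      rw [hw']
      exact hWB
    have : w' ∉ (hitDFA μ τ m C).accepts := fun h => hw'rej ((hiff w').mp h B hB)
    rw [hit_mem_accepts] at this
    rw [← hc']
    exact not_not.mp this
  apply hUR
  have : U B (B.M.eval W) = (fun x => x + (g - cntQ μ τ wstar)) '' V B := by
    rw [hW, hkey B hB, cntQ_repW]
  rw [this]
  refine ⟨cntQ μ τ wstar + t • hf B, ?_, by ring⟩
  rw [← hstabt B hB t]
  exact ⟨cntQ μ τ wstar, hVw B, rfl⟩

end Key

section AR
variable {n m : ℕ} {C : Fin m → Finset ℕ} {μ τ : ℕ}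

lemma mem_R_iff (α β : ZMod μ) (γ : ZMod τ) (δ : ZMod 2) :
    (α, β, γ, δ) ∈ Rbot μ τ m C ∪ Rtop μ τ m C ↔
      ((δ = 0 ∨ (δ = 1 ∧ α ≠ 0 ∧ β ≠ 0)) ∧
        ∃ i : Fin m, γ = (((i : ℕ) + 1 : ℕ) : ZMod τ) ∧
          ∃ v ∈ C i, β = (v : ZMod μ) * α) := by
  simp only [Set.mem_union, Rbot, Rtop, Set.mem_setOf_eq]
  constructor
  · rintro (⟨hδ, hrest⟩ | ⟨hδ, hα, hβ, _, hrest⟩)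
    · exact ⟨Or.inl hδ, hrest⟩
    · exact ⟨Or.inr ⟨hδ, hα, hβ⟩, hrest⟩
  · rintro ⟨hδ | ⟨hδ, hα, hβ⟩, hrest⟩
    · exact Or.inl ⟨hδ, hrest⟩
    · exact Or.inr ⟨hδ, hα, hβ, trivial, hrest⟩

lemma cast_ne_zero_of_C (hC : ∀ i : Fin m, (C i).Nonempty ∧ C i ⊆ Finset.Icc 1 n)
    (hnμ : n < μ) {i : Fin m} {v : ℕ} (hv : v ∈ C i) : (v : ZMod μ) ≠ 0 := by
  intro h
  rw [ZMod.natCast_eq_zero_iff] at h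
  have h1 := (hC i).2 hv
  simp only [Finset.mem_Icc] at h1
  have := Nat.le_of_dvd (by omega) h
  omega

lemma cast_i_ne_zero (hmτ : m < τ) [NeZero τ] (i : Fin m) :
    (((i : ℕ) + 1 : ℕ) : ZMod τ) ≠ 0 := by
  intro h
  rw [ZMod.natCast_eq_zero_iff] at h
  have hi := i.2
  have := Nat.le_of_dvd (by omega) h
  omega

variable [Fact (Nat.Prime μ)] [Fact (Nat.Prime τ)]

lemma origin_cover (hC : ∀ i : Fin m, (C i).Nonempty ∧ C i ⊆ Finset.Icc 1 n)
    (h2μ : 2 < μ) (hnμ : n < μ) (hmτ : m < τ) (hμτ : μ < τ)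
    (i : Fin m) (a b : ZMod μ) (c : ZMod τ) (d : ZMod 2)
    (hne : ((a, b, c, d) : ZMod μ × ZMod μ × ZMod τ × ZMod 2) ≠ 0)
    (hcovO : ∀ t : ℕ, ((0, 0, (((i : ℕ) + 1 : ℕ) : ZMod τ), 0)
        : ZMod μ × ZMod μ × ZMod τ × ZMod 2) + t • (a, b, c, d)
        ∈ Rbot μ τ m C ∪ Rtop μ τ m C) :
    c = 0 ∧ d = 0 ∧ a ≠ 0 ∧ ∃ v ∈ C i, b = (v : ZMod μ) * a := by
  have hμp : Nat.Prime μ := Fact.out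
  have hτp : Nat.Prime τ := Fact.out
  -- c = 0
  have hc : c = 0 := by
    by_contra hc
    have hD : (((2 * μ : ℕ)) : ZMod τ) * c ≠ 0 := by
      apply mul_ne_zero _ hc
      intro h0
      rw [ZMod.natCast_eq_zero_iff] at h0
      rcases (Nat.Prime.dvd_mul hτp).mp h0 with h1 | h1
      · have := Nat.le_of_dvd (by omega) h1; omega
      · have := (Nat.prime_dvd_prime_iff_eq hτp hμp).mp h1; omega
    set D := (((2 * μ : ℕ)) : ZMod τ) * c with hDdef
    set s : ℕ := ((-(((i : ℕ) + 1 : ℕ) : ZMod τ)) * D⁻¹).val with hsdef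
    have hscast : (s : ZMod τ) = (-(((i : ℕ) + 1 : ℕ) : ZMod τ)) * D⁻¹ :=
      ZMod.natCast_zmod_val _
    have hpt := hcovO (2 * μ * s)
    have e : ((0, 0, (((i : ℕ) + 1 : ℕ) : ZMod τ), 0)
        : ZMod μ × ZMod μ × ZMod τ × ZMod 2) + (2 * μ * s) • (a, b, c, d)
        = (0, 0, 0, 0) := by
      rw [smul_G]
      have e1 : ((2 * μ * s : ℕ) : ZMod μ) = 0 := by
        rw [ZMod.natCast_eq_zero_iff]; exact ⟨2 * s, by ring⟩
      have e2 : ((2 * μ * s : ℕ) : ZMod 2) = 0 := by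
        rw [ZMod.natCast_eq_zero_iff]; exact ⟨μ * s, by ring⟩
      have e3 : (((i : ℕ) + 1 : ℕ) : ZMod τ) + ((2 * μ * s : ℕ) : ZMod τ) * c = 0 := by
        have : ((2 * μ * s : ℕ) : ZMod τ) = ((2 * μ : ℕ) : ZMod τ) * (s : ZMod τ) := by
          push_cast; ring
        rw [this, hscast]
        have : (((2 * μ : ℕ)) : ZMod τ) * (-(((i : ℕ) + 1 : ℕ) : ZMod τ) * D⁻¹) * c
            = -(((i : ℕ) + 1 : ℕ) : ZMod τ) * (D⁻¹ * D) := by rw [hDdef]; ring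
        rw [this, inv_mul_cancel₀ hD]
        ring
      rw [add_G]
      simp only [Prod.mk.injEq]
      refine ⟨by rw [e1]; ring, by rw [e1]; ring, by exact e3, by rw [e2]; ring⟩
    rw [e] at hpt
    rw [mem_R_iff] at hpt
    obtain ⟨_, i', hi', _⟩ := hpt
    exact cast_i_ne_zero hmτ i' hi'.symm
  subst hc
  -- d = 0
  have hd : d = 0 := by
    by_contra hd
    have hd1 : d = 1 := (zmod2_cases d).resolve_left hd
    have hμ2 : ((μ : ℕ) : ZMod 2) = 1 := by
      have hndvd : ¬ (2 ∣ μ) := by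
        intro hdd
        have := (Nat.prime_dvd_prime_iff_eq Nat.prime_two hμp).mp hdd
        omega
      have hne0 : ((μ : ℕ) : ZMod 2) ≠ 0 := fun h0 =>
        hndvd ((ZMod.natCast_eq_zero_iff μ 2).mp h0)
      exact (zmod2_cases _).resolve_left hne0
    have hpt := hcovO μ
    have e : ((0, 0, (((i : ℕ) + 1 : ℕ) : ZMod τ), 0)
        : ZMod μ × ZMod μ × ZMod τ × ZMod 2) + (μ : ℕ) • (a, b, (0 : ZMod τ), d)
        = (0, 0, (((i : ℕ) + 1 : ℕ) : ZMod τ), 1) := by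
      rw [smul_G, add_G]
      simp only [Prod.mk.injEq]
      refine ⟨by rw [ZMod.natCast_self]; ring, by rw [ZMod.natCast_self]; ring,
        by ring, by rw [hμ2, hd1]; ring⟩
    rw [e] at hpt
    rw [mem_R_iff] at hpt
    obtain ⟨h1 | ⟨_, h2, _⟩, _⟩ := hpt
    · exact absurd h1 (by decide)
    · exact h2 rfl
  subst hd
  -- the line
  have hpt := hcovO 1
  have e : ((0, 0, (((i : ℕ) + 1 : ℕ) : ZMod τ), 0)
      : ZMod μ × ZMod μ × ZMod τ × ZMod 2) + (1 : ℕ) • (a, b, (0 : ZMod τ), (0 : ZMod 2))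
      = (a, b, (((i : ℕ) + 1 : ℕ) : ZMod τ), 0) := by
    rw [smul_G, add_G]
    simp only [Prod.mk.injEq, Nat.cast_one]
    refine ⟨by ring, by ring, by ring, by ring⟩
  rw [e] at hpt
  rw [mem_R_iff] at hpt
  obtain ⟨_, i', hi', v, hv, hb⟩ := hpt
  have hii' : i = i' := by
    have hval : ((i : ℕ) + 1) = ((i' : ℕ) + 1) := by
      have h1 : ((((i : ℕ) + 1 : ℕ) : ZMod τ)).val = (i : ℕ) + 1 :=
        ZMod.val_cast_of_lt (by have := i.2; omega)
      have h2 : ((((i' : ℕ) + 1 : ℕ) : ZMod τ)).val = (i' : ℕ) + 1 :=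
        ZMod.val_cast_of_lt (by have := i'.2; omega)
      rw [← h1, ← h2, hi']
    exact Fin.ext (by omega)
  subst hii'
  have ha : a ≠ 0 := by
    intro ha0
    apply hne
    have hb0 : b = 0 := by rw [hb, ha0]; ring
    rw [ha0, hb0]
    rfl
  exact ⟨rfl, rfl, ha, v, hv, hb⟩

lemma no_double (hC : ∀ i : Fin m, (C i).Nonempty ∧ C i ⊆ Finset.Icc 1 n)
    (h2μ : 2 < μ) (hnμ : n < μ) (hmτ : m < τ) (hμτ : μ < τ)
    (i i₁ : Fin m) (v₁ : ℕ) (a b : ZMod μ) (c : ZMod τ) (d : ZMod 2)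
    (hne : ((a, b, c, d) : ZMod μ × ZMod μ × ZMod τ × ZMod 2) ≠ 0)
    (hcovO : ∀ t : ℕ, ((0, 0, (((i : ℕ) + 1 : ℕ) : ZMod τ), 0)
        : ZMod μ × ZMod μ × ZMod τ × ZMod 2) + t • (a, b, c, d)
        ∈ Rbot μ τ m C ∪ Rtop μ τ m C)
    (hcovT : ∀ t : ℕ, ((1, (v₁ : ZMod μ), (((i₁ : ℕ) + 1 : ℕ) : ZMod τ), 1)
        : ZMod μ × ZMod μ × ZMod τ × ZMod 2) + t • (a, b, c, d)
        ∈ Rbot μ τ m C ∪ Rtop μ τ m C) : False := by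
  obtain ⟨hc, hd, ha, v, hv, hb⟩ := origin_cover hC h2μ hnμ hmτ hμτ i a b c d hne hcovO
  subst hc; subst hd
  set t : ℕ := (-a⁻¹ : ZMod μ).val with ht
  have htc : (t : ZMod μ) = -a⁻¹ := ZMod.natCast_zmod_val _
  have hpt := hcovT t
  have e : ((1, (v₁ : ZMod μ), (((i₁ : ℕ) + 1 : ℕ) : ZMod τ), 1)
      : ZMod μ × ZMod μ × ZMod τ × ZMod 2) + t • (a, b, (0 : ZMod τ), (0 : ZMod 2))
      = (0, (v₁ : ZMod μ) + (t : ZMod μ) * b, (((i₁ : ℕ) + 1 : ℕ) : ZMod τ), 1) := by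
    have h1 : (1 : ZMod μ) + (t : ZMod μ) * a = 0 := by
      rw [htc]
      have h5 : (1 : ZMod μ) + -a⁻¹ * a = 1 - a⁻¹ * a := by ring
      rw [h5, inv_mul_cancel₀ ha]
      ring
    rw [smul_G, add_G, h1]
    simp only [mul_zero, add_zero]
  rw [e] at hpt
  rw [mem_R_iff] at hpt
  obtain ⟨h1 | ⟨_, h2, _⟩, _⟩ := hpt
  · exact absurd h1 (by decide)
  · exact h2 rfl

lemma arith_bwd [Fact (Nat.Prime μ)]
    (hC : ∀ i : Fin m, (C i).Nonempty ∧ C i ⊆ Finset.Icc 1 n) (hnμ : n < μ)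
    (X : Finset ℕ) (hhit : ∀ i : Fin m, (X ∩ C i).Nonempty)
    (α β : ZMod μ) (γ : ZMod τ) (δ : ZMod 2) :
    (α, β, γ, δ) ∉ Rbot μ τ m C ∪ Rtop μ τ m C ↔
      ((¬ (α ≠ 0 ∧ ∃ i : Fin m, γ = (((i : ℕ) + 1 : ℕ) : ZMod τ) ∧
          ∃ v ∈ C i, β = (v : ZMod μ) * α)) ∧
       (∀ v ∈ X, ¬ (β - α * (v : ZMod μ) = 0 ∧
          (∃ i : Fin m, γ = (((i : ℕ) + 1 : ℕ) : ZMod τ) ∧ v ∈ C i) ∧ δ = 0))) := by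
  rw [mem_R_iff]
  constructor
  · intro hR
    constructor
    · rintro ⟨hα, i, hγ, v, hv, hβ⟩
      apply hR
      refine ⟨?_, i, hγ, v, hv, hβ⟩
      have hδ : δ = 0 ∨ δ = 1 := by
        have h01 : ∀ x : ZMod 2, x = 0 ∨ x = 1 := by decide
        exact h01 δ
      rcases hδ with h | h
      · exact Or.inl h
      · refine Or.inr ⟨h, hα, ?_⟩
        rw [hβ]
        exact mul_ne_zero (cast_ne_zero_of_C hC hnμ hv) hα
    · rintro v hvX ⟨hl, ⟨i, hγ, hvC⟩, hδ⟩
      exact hR ⟨Or.inl hδ, i, hγ, v, hvC, by rw [sub_eq_zero] at hl; rw [hl]; ring⟩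
  · rintro ⟨h1, h2⟩ ⟨hδ, i, hγ, v, hv, hβ⟩
    rcases hδ with hδ | ⟨hδ, hα, hβ0⟩
    · by_cases hα : α = 0
      · obtain ⟨v₀, hv₀⟩ := hhit i
        rw [Finset.mem_inter] at hv₀
        exact h2 v₀ hv₀.1 ⟨by rw [hβ, hα]; ring, ⟨i, hγ, hv₀.2⟩, hδ⟩
      · exact h1 ⟨hα, i, hγ, v, hv, hβ⟩
    · exact h1 ⟨hα, i, hγ, v, hv, hβ⟩


end AR

lemma endgame {n m k : ℕ} {C : Fin m → Finset ℕ} {μ τ : ℕ}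
    [Fact (Nat.Prime μ)] [Fact (Nat.Prime τ)]
    (hm : 1 ≤ m) (hC : ∀ i : Fin m, (C i).Nonempty ∧ C i ⊆ Finset.Icc 1 n)
    (h2μ : 2 < μ) (hnμ : n < μ) (hmτ : m < τ) (hμτ : μ < τ)
    (l : List (FinDFA (Fin 4))) (hlen : l.length ≤ k + 1)
    (hf : FinDFA (Fin 4) → ZMod μ × ZMod μ × ZMod τ × ZMod 2)
    (hf0 : ∀ B ∈ l, hf B ≠ 0)
    (hcov : ∀ g ∈ Rbot μ τ m C ∪ Rtop μ τ m C, ∃ B ∈ l,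
      ∀ t : ℕ, g + t • hf B ∈ Rbot μ τ m C ∪ Rtop μ τ m C) :
    ∃ X : Finset ℕ, X ⊆ Finset.Icc 1 n ∧ X.card ≤ k ∧ ∀ i : Fin m, (X ∩ C i).Nonempty := by
  classical
  haveI : Fact (1 < μ) := ⟨by omega⟩
  set i₁ : Fin m := ⟨0, hm⟩ with hi₁
  obtain ⟨v₁, hv₁⟩ := (hC i₁).1
  have hgT : ((1, (v₁ : ZMod μ), (((i₁ : ℕ) + 1 : ℕ) : ZMod τ), 1)
      : ZMod μ × ZMod μ × ZMod τ × ZMod 2) ∈ Rbot μ τ m C ∪ Rtop μ τ m C := by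
    rw [mem_R_iff]
    exact ⟨Or.inr ⟨rfl, one_ne_zero, cast_ne_zero_of_C hC hnμ hv₁⟩,
      i₁, rfl, v₁, hv₁, (mul_one _).symm⟩
  obtain ⟨Bstar, hBstar, hcovT⟩ := hcov _ hgT
  have horig : ∀ i : Fin m, ((0, 0, (((i : ℕ) + 1 : ℕ) : ZMod τ), 0)
      : ZMod μ × ZMod μ × ZMod τ × ZMod 2) ∈ Rbot μ τ m C ∪ Rtop μ τ m C := by
    intro i
    rw [mem_R_iff]
    obtain ⟨v, hv⟩ := (hC i).1
    exact ⟨Or.inl rfl, i, rfl, v, hv, by ring⟩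
  choose Bf hBf hcovO using fun i : Fin m => hcov _ (horig i)
  have hoc : ∀ i : Fin m, (hf (Bf i)).1 ≠ 0 ∧
      ∃ v ∈ C i, (hf (Bf i)).2.1 = (v : ZMod μ) * (hf (Bf i)).1 := by
    intro i
    have hne : ((((hf (Bf i)).1, (hf (Bf i)).2.1, (hf (Bf i)).2.2.1, (hf (Bf i)).2.2.2))
        : ZMod μ × ZMod μ × ZMod τ × ZMod 2) ≠ 0 := by
      rw [prod_eta]; exact hf0 _ (hBf i)
    have hcovO' : ∀ t : ℕ, ((0, 0, (((i : ℕ) + 1 : ℕ) : ZMod τ), 0)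
        : ZMod μ × ZMod μ × ZMod τ × ZMod 2)
        + t • ((hf (Bf i)).1, (hf (Bf i)).2.1, (hf (Bf i)).2.2.1, (hf (Bf i)).2.2.2)
        ∈ Rbot μ τ m C ∪ Rtop μ τ m C := by
      intro t; rw [prod_eta]; exact hcovO i t
    obtain ⟨-, -, ha, hv⟩ := origin_cover hC h2μ hnμ hmτ hμτ i _ _ _ _ hne hcovO'
    exact ⟨ha, hv⟩
  have hBne : ∀ i : Fin m, Bf i ≠ Bstar := by
    intro i he
    have hne : ((((hf (Bf i)).1, (hf (Bf i)).2.1, (hf (Bf i)).2.2.1, (hf (Bf i)).2.2.2))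
        : ZMod μ × ZMod μ × ZMod τ × ZMod 2) ≠ 0 := by
      rw [prod_eta]; exact hf0 _ (hBf i)
    have hcovO' : ∀ t : ℕ, ((0, 0, (((i : ℕ) + 1 : ℕ) : ZMod τ), 0)
        : ZMod μ × ZMod μ × ZMod τ × ZMod 2)
        + t • ((hf (Bf i)).1, (hf (Bf i)).2.1, (hf (Bf i)).2.2.1, (hf (Bf i)).2.2.2)
        ∈ Rbot μ τ m C ∪ Rtop μ τ m C := by
      intro t; rw [prod_eta]; exact hcovO i t
    have hcovT' : ∀ t : ℕ, ((1, (v₁ : ZMod μ), (((i₁ : ℕ) + 1 : ℕ) : ZMod τ), 1)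
        : ZMod μ × ZMod μ × ZMod τ × ZMod 2)
        + t • ((hf (Bf i)).1, (hf (Bf i)).2.1, (hf (Bf i)).2.2.1, (hf (Bf i)).2.2.2)
        ∈ Rbot μ τ m C ∪ Rtop μ τ m C := by
      intro t; rw [prod_eta, he]; exact hcovT t
    exact no_double hC h2μ hnμ hmτ hμτ i i₁ v₁ _ _ _ _ hne hcovO' hcovT'
  choose vf hvfC hvf using fun i : Fin m => (hoc i).2
  have huniq : ∀ i j : Fin m, Bf i = Bf j → vf i = vf j := by
    intro i j he
    have h1 : (vf i : ZMod μ) * (hf (Bf i)).1 = (vf j : ZMod μ) * (hf (Bf i)).1 := by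
      rw [← hvf i, he, hvf j]
    have h2 : (vf i : ZMod μ) = (vf j : ZMod μ) := mul_right_cancel₀ (hoc i).1 h1
    have hbi : vf i ≤ n := by
      have := (hC i).2 (hvfC i); simp only [Finset.mem_Icc] at this; omega
    have hbj : vf j ≤ n := by
      have := (hC j).2 (hvfC j); simp only [Finset.mem_Icc] at this; omega
    have e1 : ((vf i : ℕ) : ZMod μ).val = vf i := ZMod.val_cast_of_lt (by omega)
    have e2 : ((vf j : ℕ) : ZMod μ).val = vf j := ZMod.val_cast_of_lt (by omega)
    rw [← e1, ← e2, h2]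
  refine ⟨Finset.image vf Finset.univ, ?_, ?_, ?_⟩
  · intro x hx
    obtain ⟨i, -, rfl⟩ := Finset.mem_image.mp hx
    exact (hC i).2 (hvfC i)
  · set T := Finset.image Bf Finset.univ with hT
    set f : FinDFA (Fin 4) → ℕ :=
      fun B => if h : ∃ i, Bf i = B then vf h.choose else 0 with hfdef
    have hXT : Finset.image vf Finset.univ ⊆ Finset.image f T := by
      intro x hx
      obtain ⟨i, -, rfl⟩ := Finset.mem_image.mp hx
      refine Finset.mem_image.mpr ⟨Bf i, Finset.mem_image.mpr ⟨i, Finset.mem_univ _, rfl⟩, ?_⟩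
      have hex : ∃ j, Bf j = Bf i := ⟨i, rfl⟩
      rw [hfdef]
      simp only [dif_pos hex]
      exact huniq hex.choose i hex.choose_spec
    have hTsub : T ⊆ l.toFinset.erase Bstar := by
      intro B hB
      obtain ⟨i, -, rfl⟩ := Finset.mem_image.mp hB
      exact Finset.mem_erase.mpr ⟨hBne i, List.mem_toFinset.mpr (hBf i)⟩
    have h1 : (Finset.image vf Finset.univ).card ≤ (Finset.image f T).card :=
      Finset.card_le_card hXT
    have h2 : (Finset.image f T).card ≤ T.card := Finset.card_image_le
    have h3 : T.card ≤ (l.toFinset.erase Bstar).card := Finset.card_le_card hTsub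
    have h4 : (l.toFinset.erase Bstar).card = l.toFinset.card - 1 :=
      Finset.card_erase_of_mem (List.mem_toFinset.mpr hBstar)
    have h5 : l.toFinset.card ≤ l.length := List.toFinset_card_le l
    have h6 : 1 ≤ l.toFinset.card :=
      Finset.card_pos.mpr ⟨Bstar, List.mem_toFinset.mpr hBstar⟩
    omega
  · intro i
    exact ⟨vf i, Finset.mem_inter.mpr
      ⟨Finset.mem_image.mpr ⟨i, Finset.mem_univ _, rfl⟩, hvfC i⟩⟩


end HitAux

/-- the hitting-set DFA built from `S = {1, …, n}`, the nonempty subsets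
`C_1, …, C_m ⊆ S` and the primes `μ, τ` (with `2 < μ`, `n < μ`, `m < τ`, `μ < τ`) is
`(k+1)`-factor composite iff there is a hitting set `X ⊆ S` of size at most `k`. -/
theorem hitDFA_composite_iff_hittingSet (n m k : ℕ) (hn : 1 ≤ n) (hm : 1 ≤ m)
    (C : Fin m → Finset ℕ) (hC : ∀ i : Fin m, (C i).Nonempty ∧ C i ⊆ Finset.Icc 1 n)
    (μ τ : ℕ) (hμ : μ.Prime) (hτ : τ.Prime)
    (h2μ : 2 < μ) (hnμ : n < μ) (hmτ : m < τ) (hμτ : μ < τ) :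
    IsKFactorComposite (hitDFA μ τ m C) (k + 1) ↔
      ∃ X : Finset ℕ, X ⊆ Finset.Icc 1 n ∧ X.card ≤ k ∧
        ∀ i : Fin m, (X ∩ C i).Nonempty := by
  haveI : NeZero μ := ⟨hμ.pos.ne'⟩
  haveI : NeZero τ := ⟨hτ.pos.ne'⟩
  haveI : Fact (Nat.Prime μ) := ⟨hμ⟩
  haveI : Fact (Nat.Prime τ) := ⟨hτ⟩
  constructor
  · rintro ⟨l, hlen, hsz, hiff⟩
    obtain ⟨hf, hf0, hcov⟩ := key_cover μ τ m C l hsz hiff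
    exact endgame hm hC h2μ hnμ hmτ hμτ l hlen hf hf0 hcov
  · rintro ⟨X, hXsub, hXcard, hXhit⟩
    refine ⟨eDFA μ τ m C :: (X.toList.map (dDFA μ τ m C)), ?_, ?_, ?_⟩
    · simp only [List.length_cons, List.length_map, Finset.length_toList]
      omega
    · intro B hB
      have hQ : Nat.card (ZMod μ × ZMod μ × ZMod τ × ZMod 2) = μ * (μ * (τ * 2)) := by
        simp [Nat.card_prod, Nat.card_zmod]
      have hμ0 : 0 < μ := hμ.pos
      have hτ0 : 0 < τ := hτ.pos
      rcases List.mem_cons.mp hB with rfl | hB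
      · rw [eDFA_card, hQ]
        have hpos : 0 < μ * (μ * τ) := Nat.mul_pos hμ0 (Nat.mul_pos hμ0 hτ0)
        calc μ * (μ * τ) < μ * (μ * τ) * 2 := by omega
          _ = μ * (μ * (τ * 2)) := by ring
      · obtain ⟨v, hv, rfl⟩ := List.mem_map.mp hB
        rw [dDFA_card, hQ]
        have hpos : 0 < μ * (τ * 2) := Nat.mul_pos hμ0 (by omega)
        calc μ * (τ * 2) = 1 * (μ * (τ * 2)) := by ring
          _ < μ * (μ * (τ * 2)) := by
              have h3 : 0 < τ * 2 := by omega
              have := Nat.mul_lt_mul_of_lt_of_le (show 1 < μ by omega)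
                (le_refl (μ * (τ * 2))) hpos
              omega
    · intro w
      rw [hit_mem_accepts]
      rw [show (cntQ μ τ w) = ((w.count 0 : ZMod μ), (w.count 1 : ZMod μ),
        (w.count 2 : ZMod τ), (w.count 3 : ZMod 2)) from rfl]
      rw [arith_bwd hC hnμ X hXhit]
      constructor
      · rintro ⟨h1, h2⟩ B hB
        rcases List.mem_cons.mp hB with rfl | hB
        · rw [eDFA_mem_accepts]
          exact h1
        · obtain ⟨v, hv, rfl⟩ := List.mem_map.mp hB
          rw [dDFA_mem_accepts]
          exact h2 v (Finset.mem_toList.mp hv)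
      · intro hall
        constructor
        · have := hall _ (List.mem_cons_self)
          rwa [eDFA_mem_accepts] at this
        · intro v hv
          have := hall _ (List.mem_cons.mpr
            (Or.inr (List.mem_map.mpr ⟨v, Finset.mem_toList.mpr hv, rfl⟩)))
          rwa [dDFA_mem_accepts] at this
end
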